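/- arXiv:1011.5964 — 2 statements merged into one kernel-verified Lean document; each statement's English description precedes it below -/
import Mathlib

section
/- Let n ≥ 3 and let A be an n×n real matrix. Then the minimizer ŝ(A) of ‖B − A‖_F over B ∈ τ̂ is the block-diagonal matrix whose (1,1) entry is A₁₁, whose (n,n) entry is Aₙₙ, whose central (n−2)×(n−2) block is s(A(2:n−1,2:n−1)) := S_{n−2}·diag(S_{n−2}·A(2:n−1,2:n−1)·S_{n−2})·S_{n−2} (the Frobenius-optimal approximation of the central submatrix from the sine algebra), and whose remaining entries are zero. -/
open Matrix

/-- The sine transform matrix of type I: `(S_m)_{ij} = sqrt(2/(m+1))·sin(ijπ/(m+1))`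
for `1 ≤ i,j ≤ m` (indexed here by `Fin m`, i.e. with indices shifted by one). -/
noncomputable def sineMat (m : ℕ) : Matrix (Fin m) (Fin m) ℝ :=
  Matrix.of fun i j =>
    Real.sqrt (2 / (m + 1)) *
      Real.sin ((((i : ℕ) : ℝ) + 1) * (((j : ℕ) : ℝ) + 1) * Real.pi / (m + 1))

/-- `Ŝ_n = diag(1, S_{n-2}, 1)`: the `n×n` block-diagonal matrix with `(1,1)` entry `1`,
central block the sine transform matrix `S_{n-2}`, and `(n,n)` entry `1`. -/
noncomputable def Shat (n : ℕ) : Matrix (Fin n) (Fin n) ℝ :=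
  Matrix.of fun i j =>
    if (i : ℕ) = 0 ∧ (j : ℕ) = 0 then 1
    else if (i : ℕ) = n - 1 ∧ (j : ℕ) = n - 1 then 1
    else if h : 0 < (i : ℕ) ∧ (i : ℕ) < n - 1 ∧ 0 < (j : ℕ) ∧ (j : ℕ) < n - 1 then
      sineMat (n - 2) ⟨(i : ℕ) - 1, by omega⟩ ⟨(j : ℕ) - 1, by omega⟩
    else 0

/-- The Frobenius norm of a real matrix. -/
noncomputable def frob {ι κ : Type*} [Fintype ι] [Fintype κ] (A : Matrix ι κ ℝ) : ℝ :=
  Real.sqrt (∑ i, ∑ j, (A i j) ^ 2)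

/-- The central submatrix `A(2:n-1, 2:n-1)` (rows and columns 2 through `n-1`, 1-based). -/
def centerSub {n : ℕ} (hn : 3 ≤ n) (A : Matrix (Fin n) (Fin n) ℝ) :
    Matrix (Fin (n - 2)) (Fin (n - 2)) ℝ :=
  A.submatrix (fun i => ⟨(i : ℕ) + 1, by have := i.isLt; omega⟩)
    (fun j => ⟨(j : ℕ) + 1, by have := j.isLt; omega⟩)

/-- The `n×n` block-diagonal matrix with `(1,1)` entry `a`, `(n,n)` entry `b`,
central `(n-2)×(n-2)` block `M`, and all remaining entries zero. -/
noncomputable def blockDiagExt (n : ℕ) (a b : ℝ) (M : Matrix (Fin (n - 2)) (Fin (n - 2)) ℝ) :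
    Matrix (Fin n) (Fin n) ℝ :=
  Matrix.of fun i j =>
    if (i : ℕ) = 0 ∧ (j : ℕ) = 0 then a
    else if (i : ℕ) = n - 1 ∧ (j : ℕ) = n - 1 then b
    else if h : 0 < (i : ℕ) ∧ (i : ℕ) < n - 1 ∧ 0 < (j : ℕ) ∧ (j : ℕ) < n - 1 then
      M ⟨(i : ℕ) - 1, by omega⟩ ⟨(j : ℕ) - 1, by omega⟩
    else 0

/-- The optimal sine-algebra approximation `s(M) = S_m · diag(S_m M S_m) · S_m` of an
`m×m` matrix `M` (Frobenius-optimal approximation from the algebra `τ`). -/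
noncomputable def sOpt {m : ℕ} (M : Matrix (Fin m) (Fin m) ℝ) : Matrix (Fin m) (Fin m) ℝ :=
  sineMat m * Matrix.diagonal (Matrix.diag (sineMat m * M * sineMat m)) * sineMat m

-- ===================== auxiliary lemmas =====================
/-- The middle embedding. -/
private def mide (m : ℕ) (i : Fin (m+1)) : Fin (m+3) := ⟨(i:ℕ)+1, by omega⟩

/-- Recast a `(m+3-2)`-matrix as an `(m+1)`-matrix (definitional). -/
private def recast {m : ℕ} (X : Matrix (Fin (m+3-2)) (Fin (m+3-2)) ℝ) :
    Matrix (Fin (m+1)) (Fin (m+1)) ℝ := X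


open Real in
private theorem sum_cos_odd (m r : ℕ) (hr : Odd r) :
    ∑ i : Fin m, Real.cos (r * ((i:ℝ)+1) * π / (m+1)) = 0 := by
  have key : ∀ i : Fin m, Real.cos (r * (((i.rev :ℕ):ℝ)+1) * π / (m+1))
      = - Real.cos (r * ((i:ℝ)+1) * π / (m+1)) := by
    intro i
    have hle : (i:ℕ)+1 ≤ m := i.isLt
    have hv : ((i.rev : ℕ) : ℝ) + 1 = (m:ℝ) - i := by
      rw [Fin.val_rev, Nat.cast_sub hle]; push_cast; ring
    rw [hv]
    have harg : (r:ℝ) * ((m:ℝ) - i) * π / (m+1)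
        = r * π - r * ((i:ℝ)+1) * π / (m+1) := by
      have : ((m:ℝ)+1) ≠ 0 := by positivity
      field_simp; ring
    rw [harg, Real.cos_nat_mul_pi_sub, hr.neg_one_pow, neg_one_mul]
  have h1 : ∑ i : Fin m, Real.cos (r * ((i:ℝ)+1) * π / (m+1))
      = ∑ i : Fin m, Real.cos (r * (((i.rev:ℕ):ℝ)+1) * π / (m+1)) :=
    (Equiv.sum_comp Fin.revPerm fun i => Real.cos (r * ((i:ℝ)+1) * π / (m+1))).symm
  simp only [key, Finset.sum_neg_distrib] at h1
  linarith

open Real in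
private theorem sum_cos_even (m r : ℕ) (hr : Even r) (h0 : 0 < r) (h2 : r < 2*(m+1)) :
    ∑ i : Fin m, Real.cos (r * ((i:ℝ)+1) * π / (m+1)) = -1 := by
  obtain ⟨s, hs⟩ := hr
  have hsr : r = 2 * s := by omega
  subst hsr
  have hs0 : 0 < s := by omega
  have hsm : s < m + 1 := by omega
  set N : ℝ := (m:ℝ) + 1 with hN
  have hNpos : (0:ℝ) < N := by positivity
  set θ : ℝ := 2 * π * s / N with hθ
  set z : ℂ := Complex.exp (θ * Complex.I) with hz
  have hzpow : ∀ k : ℕ, z ^ k = Complex.exp ((k * θ : ℝ) * Complex.I) := by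
    intro k
    rw [hz, ← Complex.exp_nat_mul]
    push_cast; ring_nf
  have hzN : z ^ (m+1) = 1 := by
    rw [hzpow]
    have : ((m+1 : ℕ) * θ : ℝ) = (s:ℝ) * (2 * π) := by
      rw [hθ, hN]; push_cast; field_simp
    rw [this]
    push_cast
    have hcast : ((s:ℂ) * (2 * (π:ℂ))) * Complex.I = (s:ℤ) * (2 * π * Complex.I) := by
      push_cast; ring
    rw [hcast]
    exact Complex.exp_int_mul_two_pi_mul_I s
  have hz1 : z ≠ 1 := by
    rw [hz, Ne, Complex.exp_eq_one_iff]
    rintro ⟨k, hk⟩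
    have him := congrArg Complex.im hk
    simp [Complex.ofReal_mul] at him
    have : θ = (k:ℝ) * (2*π) := by
      simpa [mul_comm, mul_assoc, mul_left_comm] using him
    have hθval : θ = 2 * π * (s / N) := by rw [hθ]; ring
    have hfrac : (s:ℝ)/N = (k:ℝ) := by
      have hπ : (0:ℝ) < π := Real.pi_pos
      nlinarith [this, hθval]
    have h1 : (0:ℝ) < (s:ℝ)/N := by positivity
    have h2' : (s:ℝ)/N < 1 := by
      rw [div_lt_one hNpos, hN]; push_cast; exact_mod_cast hsm
    rw [hfrac] at h1 h2'
    have : (0:ℤ) < k := by exact_mod_cast h1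
    have : (k:ℤ) < 1 := by exact_mod_cast h2'
    omega
  have hsum : ∑ k ∈ Finset.range (m+1), z ^ k = 0 := by
    rw [geom_sum_eq hz1, hzN]
    simp
  have hre : ∀ k : ℕ, (z ^ k).re = Real.cos (k * θ) := by
    intro k; rw [hzpow, Complex.exp_ofReal_mul_I_re]
  have hsplit : ∑ k ∈ Finset.range (m+1), z ^ k
      = 1 + ∑ k ∈ Finset.range m, z ^ (k+1) := by
    rw [Finset.sum_range_succ']; simp [add_comm]
  have hres : 1 + ∑ k ∈ Finset.range m, Real.cos ((k+1) * θ) = (0:ℝ) := by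
    have := congrArg Complex.re (hsplit ▸ hsum)
    simpa [Complex.add_re, Complex.re_sum, hre] using this
  have hconv : ∀ k : ℕ, Real.cos ((k+1) * θ) = Real.cos ((2*s:ℕ) * ((k:ℝ)+1) * π / N) := by
    intro k
    congr 1
    rw [hθ]; push_cast; ring
  rw [Fin.sum_univ_eq_sum_range (fun k => Real.cos ((2*s:ℕ) * ((k:ℝ)+1) * π / (m+1)))]
  have : ∑ k ∈ Finset.range m, Real.cos ((2*s:ℕ) * ((k:ℝ)+1) * π / N) = -1 := by
    simp only [← hconv]; linarith
  simpa [hN] using this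

open Real in
private theorem sin_sum_key (m a b : ℕ) (ha : 1 ≤ a) (ha' : a ≤ m) (hb : 1 ≤ b) (hb' : b ≤ m) :
    ∑ k : Fin m, Real.sin (a * ((k:ℝ)+1) * π/(m+1)) * Real.sin (b * ((k:ℝ)+1) * π/(m+1))
    = if a = b then ((m:ℝ)+1)/2 else 0 := by
  set r1 : ℕ := if b ≤ a then a - b else b - a with hr1
  have term : ∀ k : Fin m,
      Real.sin (a * ((k:ℝ)+1) * π/(m+1)) * Real.sin (b * ((k:ℝ)+1) * π/(m+1))
      = (Real.cos (r1 * ((k:ℝ)+1) * π/(m+1)) - Real.cos ((a+b : ℕ) * ((k:ℝ)+1) * π/(m+1)))/2 := by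
    intro k
    set x := (a:ℝ) * ((k:ℝ)+1) * π/(m+1) with hx
    set y := (b:ℝ) * ((k:ℝ)+1) * π/(m+1) with hy
    have hsub : Real.cos (x - y) = Real.cos x * Real.cos y + Real.sin x * Real.sin y :=
      Real.cos_sub x y
    have hadd : Real.cos (x + y) = Real.cos x * Real.cos y - Real.sin x * Real.sin y :=
      Real.cos_add x y
    have hxy1 : (r1:ℝ) * ((k:ℝ)+1) * π/(m+1) = |((a:ℝ) - b)| * ((k:ℝ)+1) * π/(m+1) := by
      congr 2
      rcases le_or_gt b a with h | h
      · rw [hr1, if_pos h, Nat.cast_sub h, abs_of_nonneg (by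
          have : (b:ℝ) ≤ a := by exact_mod_cast h
          linarith)]
      · rw [hr1, if_neg (by omega), Nat.cast_sub h.le, abs_of_neg (by
          have : (a:ℝ) < b := by exact_mod_cast h
          linarith)]
        ring
    have hcos1 : Real.cos (r1 * ((k:ℝ)+1) * π/(m+1)) = Real.cos (x - y) := by
      rw [hxy1]
      rcases abs_choice ((a:ℝ) - b) with h | h
      · rw [h]; congr 1; rw [hx, hy]; ring
      · rw [h, show -((a:ℝ)-b) * ((k:ℝ)+1) * π/(m+1) = -((((a:ℝ)-b)) * ((k:ℝ)+1) * π/(m+1)) by ring,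
          Real.cos_neg]
        congr 1; rw [hx, hy]; ring
    have hcos2 : Real.cos ((a+b:ℕ) * ((k:ℝ)+1) * π/(m+1)) = Real.cos (x + y) := by
      congr 1; rw [hx, hy]; push_cast; ring
    rw [hcos1, hcos2, hsub, hadd]; ring
  rw [Finset.sum_congr rfl (fun k _ => term k)]
  have hsplit : ∑ k : Fin m, (Real.cos (r1 * ((k:ℝ)+1) * π/(m+1))
        - Real.cos ((a+b:ℕ) * ((k:ℝ)+1) * π/(m+1)))/2
      = ((∑ k : Fin m, Real.cos (r1 * ((k:ℝ)+1) * π/(m+1)))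
        - ∑ k : Fin m, Real.cos ((a+b:ℕ) * ((k:ℝ)+1) * π/(m+1)))/2 := by
    rw [← Finset.sum_sub_distrib, ← Finset.sum_div]
  rw [hsplit]
  have hab2 : ∑ k : Fin m, Real.cos ((a+b:ℕ) * ((k:ℝ)+1) * π/(m+1))
      = if Even (a+b) then -1 else 0 := by
    rcases Nat.even_or_odd (a+b) with h | h
    · rw [if_pos h]; exact sum_cos_even m _ h (by omega) (by omega)
    · rw [if_neg (Nat.not_even_iff_odd.mpr h)]; exact sum_cos_odd m _ h
  by_cases hab : a = b
  · subst hab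
    have : r1 = 0 := by rw [hr1]; simp
    rw [this] at *
    have h1 : ∑ k : Fin m, Real.cos ((0:ℕ) * ((k:ℝ)+1) * π/(m+1)) = m := by
      simp
    rw [if_pos rfl, h1, hab2, if_pos ⟨a, rfl⟩]
    push_cast; ring
  · have hr1pos : 0 < r1 := by rw [hr1]; split <;> omega
    have hr1lt : r1 < 2*(m+1) := by rw [hr1]; split <;> omega
    have hpar : (Even r1 ↔ Even (a+b)) := by
      rcases le_or_gt b a with h | h
      · rw [hr1, if_pos h, Nat.even_sub h, Nat.even_add]
      · rw [hr1, if_neg (not_le.mpr h), Nat.even_sub h.le, Nat.even_add]; tauto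
    rw [if_neg hab, hab2]
    rcases Nat.even_or_odd (a+b) with h | h
    · rw [if_pos h, sum_cos_even m r1 (hpar.mpr h) hr1pos hr1lt]; ring
    · rw [if_neg (Nat.not_even_iff_odd.mpr h), sum_cos_odd m r1 (by
        rcases Nat.even_or_odd r1 with h' | h'
        · exact absurd (hpar.mp h') (Nat.not_even_iff_odd.mpr h)
        · exact h')]
      ring

open Real in
private theorem sineMat_mul_self (m : ℕ) : sineMat m * sineMat m = 1 := by
  ext i j
  rw [Matrix.mul_apply]
  have hc : Real.sqrt (2 / ((m:ℝ) + 1)) * Real.sqrt (2 / ((m:ℝ) + 1)) = 2 / ((m:ℝ)+1) :=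
    Real.mul_self_sqrt (by positivity)
  have hterm : ∀ k : Fin m, sineMat m i k * sineMat m k j
      = (2/((m:ℝ)+1)) * (Real.sin ((i+1:ℕ) * ((k:ℝ)+1) * π/(m+1))
          * Real.sin ((j+1:ℕ) * ((k:ℝ)+1) * π/(m+1))) := by
    intro k
    simp only [sineMat, Matrix.of_apply]
    have hX : ((((i:ℕ):ℝ)+1)) * ((((k:ℕ):ℝ)+1)) * π / ((m:ℝ)+1)
        = (((i+1:ℕ)):ℝ) * (((k:ℕ):ℝ)+1) * π/((m:ℝ)+1) := by push_cast; ring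
    have hY : ((((k:ℕ):ℝ)+1)) * ((((j:ℕ):ℝ)+1)) * π / ((m:ℝ)+1)
        = (((j+1:ℕ)):ℝ) * (((k:ℕ):ℝ)+1) * π/((m:ℝ)+1) := by push_cast; ring
    have key : ∀ (s t : ℝ), (Real.sqrt (2/((m:ℝ)+1)) * s) * (Real.sqrt (2/((m:ℝ)+1)) * t)
        = (2/((m:ℝ)+1)) * (s*t) := by
      intro s t
      calc (Real.sqrt (2/((m:ℝ)+1)) * s) * (Real.sqrt (2/((m:ℝ)+1)) * t)
          = (Real.sqrt (2/((m:ℝ)+1)) * Real.sqrt (2/((m:ℝ)+1))) * (s*t) :=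
            mul_mul_mul_comm _ _ _ _
        _ = (2/((m:ℝ)+1)) * (s*t) := by rw [hc]
    rw [hX, hY]
    exact key _ _
  rw [Finset.sum_congr rfl (fun k _ => hterm k), ← Finset.mul_sum,
    sin_sum_key m (i+1) (j+1) (by omega) (by omega) (by omega) (by omega)]
  have hN : ((m:ℝ)+1) ≠ 0 := by positivity
  by_cases hij : i = j
  · subst hij
    rw [if_pos rfl, Matrix.one_apply_eq]
    field_simp
  · rw [if_neg (by
      intro h
      exact hij (Fin.ext (by omega))), Matrix.one_apply_ne hij]
    ring


section entries
variable {m : ℕ}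

private lemma shat_00 : Shat (m+3) ⟨0, by omega⟩ ⟨0, by omega⟩ = 1 := by
  simp [Shat]

private lemma shat_0j (j : Fin (m+3)) (hj : (j:ℕ) ≠ 0) : Shat (m+3) ⟨0, by omega⟩ j = 0 := by
  simp only [Shat, Matrix.of_apply]
  rw [if_neg (by simp [hj]), if_neg (by omega), dif_neg (by omega)]

private lemma shat_ll : Shat (m+3) ⟨m+2, by omega⟩ ⟨m+2, by omega⟩ = 1 := by
  simp only [Shat, Matrix.of_apply]
  rw [if_neg (by omega), if_pos (by omega)]

private lemma shat_lj (j : Fin (m+3)) (hj : (j:ℕ) ≠ m+2) : Shat (m+3) ⟨m+2, by omega⟩ j = 0 := by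
  simp only [Shat, Matrix.of_apply]
  rw [if_neg (by omega), if_neg (by omega), dif_neg (by omega)]

private lemma shat_m0 (i : Fin (m+1)) : Shat (m+3) (mide m i) ⟨0, by omega⟩ = 0 := by
  simp only [Shat, mide, Matrix.of_apply]
  rw [if_neg (by omega), if_neg (by omega), dif_neg (by omega)]

private lemma shat_ml (i : Fin (m+1)) : Shat (m+3) (mide m i) ⟨m+2, by omega⟩ = 0 := by
  simp only [Shat, mide, Matrix.of_apply]
  have := i.isLt
  rw [if_neg (by omega), if_neg (by omega), dif_neg (by omega)]

private lemma shat_mm (i j : Fin (m+1)) :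
    Shat (m+3) (mide m i) (mide m j) = sineMat (m+1) i j := by
  simp only [Shat, mide, Matrix.of_apply]
  have hi := i.isLt
  have hj := j.isLt
  rw [if_neg (by omega), if_neg (by omega), dif_pos (by omega)]
  congr 1

private lemma sine_symm (M : ℕ) (i j : Fin M) : sineMat M i j = sineMat M j i := by
  simp only [sineMat, Matrix.of_apply]
  ring_nf

private lemma shat_symm (i j : Fin (m+3)) : Shat (m+3) i j = Shat (m+3) j i := by
  simp only [Shat, Matrix.of_apply]
  split_ifs <;> first | rfl | omega | exact sine_symm _ _ _

private lemma shat_transpose : (Shat (m+3))ᵀ = Shat (m+3) := by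
  ext i j
  rw [Matrix.transpose_apply]
  exact shat_symm j i

private lemma sum_decomp (f : Fin (m+3) → ℝ) :
    ∑ k, f k = f ⟨0, by omega⟩ + (∑ i : Fin (m+1), f (mide m i)) + f ⟨m+2, by omega⟩ := by
  rw [Fin.sum_univ_succ, Fin.sum_univ_castSucc]
  have h0 : (0 : Fin (m+3)) = ⟨0, by omega⟩ := rfl
  have hl : ((Fin.last (m+1)).succ) = (⟨m+2, by omega⟩ : Fin (m+3)) := rfl
  have hm : ∀ i : Fin (m+1), (i.castSucc).succ = mide m i := fun i => rfl
  simp only [h0, hl, hm]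
  ring

private lemma row0 (v : Fin (m+3) → ℝ) :
    ∑ k, Shat (m+3) ⟨0, by omega⟩ k * v k = v ⟨0, by omega⟩ := by
  rw [sum_decomp (fun k => Shat (m+3) ⟨0, by omega⟩ k * v k)]
  rw [shat_00, shat_0j _ (by simp)]
  have : ∀ i : Fin (m+1), Shat (m+3) ⟨0, by omega⟩ (mide m i) * v (mide m i) = 0 := by
    intro i; rw [shat_0j _ (by simp [mide]), zero_mul]
  rw [Finset.sum_congr rfl (fun i _ => this i)]
  simp

private lemma rowl (v : Fin (m+3) → ℝ) :
    ∑ k, Shat (m+3) ⟨m+2, by omega⟩ k * v k = v ⟨m+2, by omega⟩ := by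
  rw [sum_decomp (fun k => Shat (m+3) ⟨m+2, by omega⟩ k * v k)]
  rw [shat_ll, shat_lj _ (by simp)]
  have : ∀ i : Fin (m+1), Shat (m+3) ⟨m+2, by omega⟩ (mide m i) * v (mide m i) = 0 := by
    intro i
    have := i.isLt
    rw [shat_lj _ (by simp [mide]; omega), zero_mul]
  rw [Finset.sum_congr rfl (fun i _ => this i)]
  simp

private lemma rowm (i : Fin (m+1)) (v : Fin (m+3) → ℝ) :
    ∑ k, Shat (m+3) (mide m i) k * v k
      = ∑ k : Fin (m+1), sineMat (m+1) i k * v (mide m k) := by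
  rw [sum_decomp (fun k => Shat (m+3) (mide m i) k * v k)]
  rw [shat_m0, shat_ml]
  simp only [shat_mm]
  ring

private lemma col0 (v : Fin (m+3) → ℝ) :
    ∑ k, v k * Shat (m+3) k ⟨0, by omega⟩ = v ⟨0, by omega⟩ := by
  have h : ∀ k, v k * Shat (m+3) k ⟨0, by omega⟩ = Shat (m+3) ⟨0, by omega⟩ k * v k :=
    fun k => by rw [shat_symm, mul_comm]
  rw [Finset.sum_congr rfl (fun k _ => h k), row0]

private lemma coll (v : Fin (m+3) → ℝ) :
    ∑ k, v k * Shat (m+3) k ⟨m+2, by omega⟩ = v ⟨m+2, by omega⟩ := by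
  have h : ∀ k, v k * Shat (m+3) k ⟨m+2, by omega⟩ = Shat (m+3) ⟨m+2, by omega⟩ k * v k :=
    fun k => by rw [shat_symm, mul_comm]
  rw [Finset.sum_congr rfl (fun k _ => h k), rowl]

private lemma colm (j : Fin (m+1)) (v : Fin (m+3) → ℝ) :
    ∑ k, v k * Shat (m+3) k (mide m j)
      = ∑ k : Fin (m+1), sineMat (m+1) j k * v (mide m k) := by
  have h : ∀ k, v k * Shat (m+3) k (mide m j) = Shat (m+3) (mide m j) k * v k :=
    fun k => by rw [shat_symm, mul_comm]
  rw [Finset.sum_congr rfl (fun k _ => h k), rowm]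

end entries

section bdes
variable {m : ℕ} {a b : ℝ} {M : Matrix (Fin (m+1)) (Fin (m+1)) ℝ}


private lemma bde_00 : blockDiagExt (m+3) a b M ⟨0, by omega⟩ ⟨0, by omega⟩ = a := by
  simp [blockDiagExt]

private lemma bde_0j (j : Fin (m+3)) (hj : (j:ℕ) ≠ 0) : blockDiagExt (m+3) a b M ⟨0, by omega⟩ j = 0 := by
  simp only [blockDiagExt, Matrix.of_apply]
  rw [if_neg (by simp [hj]), if_neg (by omega), dif_neg (by omega)]

private lemma bde_ll : blockDiagExt (m+3) a b M ⟨m+2, by omega⟩ ⟨m+2, by omega⟩ = b := by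
  simp only [blockDiagExt, Matrix.of_apply]
  rw [if_neg (by omega), if_pos (by omega)]

private lemma bde_lj (j : Fin (m+3)) (hj : (j:ℕ) ≠ m+2) :
    blockDiagExt (m+3) a b M ⟨m+2, by omega⟩ j = 0 := by
  simp only [blockDiagExt, Matrix.of_apply]
  rw [if_neg (by omega), if_neg (by omega), dif_neg (by omega)]

private lemma bde_m0 (i : Fin (m+1)) : blockDiagExt (m+3) a b M (mide m i) ⟨0, by omega⟩ = 0 := by
  simp only [blockDiagExt, mide, Matrix.of_apply]
  rw [if_neg (by omega), if_neg (by omega), dif_neg (by omega)]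

private lemma bde_ml (i : Fin (m+1)) : blockDiagExt (m+3) a b M (mide m i) ⟨m+2, by omega⟩ = 0 := by
  simp only [blockDiagExt, mide, Matrix.of_apply]
  have := i.isLt
  rw [if_neg (by omega), if_neg (by omega), dif_neg (by omega)]

private lemma bde_mm (i j : Fin (m+1)) :
    blockDiagExt (m+3) a b M (mide m i) (mide m j) = M i j := by
  simp only [blockDiagExt, mide, Matrix.of_apply]
  have hi := i.isLt
  have hj := j.isLt
  rw [if_neg (by omega), if_neg (by omega), dif_pos (by omega)]
  have h1 : (⟨(i:ℕ)+1-1, by omega⟩ : Fin (m+1)) = i := Fin.ext (by simp)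
  have h2 : (⟨(j:ℕ)+1-1, by omega⟩ : Fin (m+1)) = j := Fin.ext (by simp)
  rw [h1, h2]

end bdes
section structural
variable {m : ℕ}

private lemma L1 (d : Fin (m+3) → ℝ) :
    Shat (m+3) * Matrix.diagonal d * Shat (m+3)
      = blockDiagExt (m+3) (d ⟨0, by omega⟩) (d ⟨m+2, by omega⟩)
          (sineMat (m+1) * Matrix.diagonal (fun i => d (mide m i)) * sineMat (m+1)) := by
  ext i j
  rw [Matrix.mul_apply]
  simp only [Matrix.mul_diagonal]
  obtain hi | hi | hi : (i:ℕ)=0 ∨ ((0<(i:ℕ)) ∧ (i:ℕ) < m+2) ∨ (i:ℕ)=m+2 := by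
    have := i.isLt; omega
  · have hieq : i = ⟨0, Nat.succ_pos _⟩ := Fin.ext hi
    subst hieq
    simp only [mul_assoc]
    rw [row0 (fun k => d k * Shat (m+3) k j)]
    by_cases hj : (j:ℕ) = 0
    · have hjeq : j = ⟨0, Nat.succ_pos _⟩ := Fin.ext hj
      subst hjeq
      rw [shat_00, bde_00, mul_one]
    · rw [shat_0j j hj, mul_zero, bde_0j j hj]
  · obtain ⟨i', hieq⟩ : ∃ i' : Fin (m+1), i = mide m i' :=
      ⟨⟨(i:ℕ)-1, by omega⟩, Fin.ext (by simp [mide]; omega)⟩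
    subst hieq
    simp only [mul_assoc]
    rw [rowm i' (fun k => d k * Shat (m+3) k j)]
    obtain hj | hj | hj : (j:ℕ)=0 ∨ ((0<(j:ℕ)) ∧ (j:ℕ) < m+2) ∨ (j:ℕ)=m+2 := by
      have := j.isLt; omega
    · have hjeq : j = ⟨0, Nat.succ_pos _⟩ := Fin.ext hj
      subst hjeq
      rw [Finset.sum_congr rfl (fun k' _ => by rw [shat_m0, mul_zero, mul_zero]),
        Finset.sum_const_zero, bde_m0]
    · obtain ⟨j', hjeq⟩ : ∃ j' : Fin (m+1), j = mide m j' :=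
        ⟨⟨(j:ℕ)-1, by omega⟩, Fin.ext (by simp [mide]; omega)⟩
      subst hjeq
      rw [Finset.sum_congr rfl (fun k' _ => by rw [shat_mm]),
        bde_mm, Matrix.mul_apply]
      simp only [Matrix.diagonal_mul]
    · have hjeq : j = ⟨m+2, Nat.lt_succ_self _⟩ := Fin.ext hj
      subst hjeq
      rw [Finset.sum_congr rfl (fun k' _ => by rw [shat_ml, mul_zero, mul_zero]),
        Finset.sum_const_zero, bde_ml]
  · have hieq : i = ⟨m+2, Nat.lt_succ_self _⟩ := Fin.ext hi
    subst hieq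
    simp only [mul_assoc]
    rw [rowl (fun k => d k * Shat (m+3) k j)]
    by_cases hj : (j:ℕ) = m+2
    · have hjeq : j = ⟨m+2, Nat.lt_succ_self _⟩ := Fin.ext hj
      subst hjeq
      rw [shat_ll, bde_ll, mul_one]
    · rw [shat_lj j hj, mul_zero, bde_lj j hj]

private lemma c00 (A : Matrix (Fin (m+3)) (Fin (m+3)) ℝ) :
    (Shat (m+3) * A * Shat (m+3)) ⟨0, by omega⟩ ⟨0, by omega⟩ = A ⟨0, by omega⟩ ⟨0, by omega⟩ := by
  rw [Matrix.mul_apply, col0 (fun k => (Shat (m+3) * A) ⟨0, by omega⟩ k),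
    Matrix.mul_apply, row0 (fun k => A k ⟨0, by omega⟩)]

private lemma cll (A : Matrix (Fin (m+3)) (Fin (m+3)) ℝ) :
    (Shat (m+3) * A * Shat (m+3)) ⟨m+2, by omega⟩ ⟨m+2, by omega⟩
      = A ⟨m+2, by omega⟩ ⟨m+2, by omega⟩ := by
  rw [Matrix.mul_apply, coll (fun k => (Shat (m+3) * A) ⟨m+2, by omega⟩ k),
    Matrix.mul_apply, rowl (fun k => A k ⟨m+2, by omega⟩)]

private lemma cmm (hn : 3 ≤ m+3) (A : Matrix (Fin (m+3)) (Fin (m+3)) ℝ) (i j : Fin (m+1)) :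
    (Shat (m+3) * A * Shat (m+3)) (mide m i) (mide m j)
      = (sineMat (m+1) * recast (centerSub hn A) * sineMat (m+1)) i j := by
  rw [Matrix.mul_apply, colm j (fun k => (Shat (m+3) * A) (mide m i) k)]
  have inner : ∀ k' : Fin (m+1), (Shat (m+3) * A) (mide m i) (mide m k')
      = (sineMat (m+1) * recast (centerSub hn A)) i k' := by
    intro k'
    rw [Matrix.mul_apply, rowm i (fun l => A l (mide m k')), Matrix.mul_apply]
    exact Finset.sum_congr rfl (fun l _ => rfl)
  rw [Finset.sum_congr rfl (fun k' _ => by rw [inner k']), Matrix.mul_apply]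
  exact Finset.sum_congr rfl (fun k' _ => by rw [sine_symm, mul_comm])

private lemma shat_mul_self : Shat (m+3) * Shat (m+3) = 1 := by
  ext i j
  rw [Matrix.mul_apply]
  obtain hi | hi | hi : (i:ℕ)=0 ∨ ((0<(i:ℕ)) ∧ (i:ℕ) < m+2) ∨ (i:ℕ)=m+2 := by
    have := i.isLt; omega
  · have hieq : i = ⟨0, Nat.succ_pos _⟩ := Fin.ext hi
    subst hieq
    rw [row0 (fun k => Shat (m+3) k j)]
    by_cases hj : (j:ℕ) = 0
    · have hjeq : j = ⟨0, Nat.succ_pos _⟩ := Fin.ext hj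
      subst hjeq
      rw [shat_00, Matrix.one_apply_eq]
    · rw [shat_0j j hj, Matrix.one_apply_ne (by
        intro h; exact hj (by rw [← h])), ]
  · obtain ⟨i', hieq⟩ : ∃ i' : Fin (m+1), i = mide m i' :=
      ⟨⟨(i:ℕ)-1, by omega⟩, Fin.ext (by simp [mide]; omega)⟩
    subst hieq
    rw [rowm i' (fun k => Shat (m+3) k j)]
    obtain hj | hj | hj : (j:ℕ)=0 ∨ ((0<(j:ℕ)) ∧ (j:ℕ) < m+2) ∨ (j:ℕ)=m+2 := by
      have := j.isLt; omega
    · have hjeq : j = ⟨0, Nat.succ_pos _⟩ := Fin.ext hj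
      subst hjeq
      rw [Finset.sum_congr rfl (fun k' _ => by rw [shat_m0, mul_zero]),
        Finset.sum_const_zero, Matrix.one_apply_ne (by
          intro h
          have := congrArg Fin.val h
          simp [mide] at this)]
    · obtain ⟨j', hjeq⟩ : ∃ j' : Fin (m+1), j = mide m j' :=
        ⟨⟨(j:ℕ)-1, by omega⟩, Fin.ext (by simp [mide]; omega)⟩
      subst hjeq
      simp only [shat_mm]
      rw [← Matrix.mul_apply, sineMat_mul_self]
      by_cases hij : i' = j'
      · subst hij
        rw [Matrix.one_apply_eq, Matrix.one_apply_eq]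
      · rw [Matrix.one_apply_ne hij, Matrix.one_apply_ne (by
          intro h
          have := congrArg Fin.val h
          simp [mide] at this
          exact hij (Fin.ext this))]
    · have hjeq : j = ⟨m+2, Nat.lt_succ_self _⟩ := Fin.ext hj
      subst hjeq
      rw [Finset.sum_congr rfl (fun k' _ => by rw [shat_ml, mul_zero]),
        Finset.sum_const_zero, Matrix.one_apply_ne (by
          intro h
          have := congrArg Fin.val h
          simp [mide] at this
          omega)]
  · have hieq : i = ⟨m+2, Nat.lt_succ_self _⟩ := Fin.ext hi
    subst hieq
    rw [rowl (fun k => Shat (m+3) k j)]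
    by_cases hj : (j:ℕ) = m+2
    · have hjeq : j = ⟨m+2, Nat.lt_succ_self _⟩ := Fin.ext hj
      subst hjeq
      rw [shat_ll, Matrix.one_apply_eq]
    · rw [shat_lj j hj, Matrix.one_apply_ne (by
        intro h; exact hj (by rw [← h]))]

private lemma sumsq_trace {N : ℕ} (X : Matrix (Fin N) (Fin N) ℝ) :
    ∑ i, ∑ j, X i j ^ 2 = Matrix.trace (Xᵀ * X) := by
  rw [Matrix.trace]
  simp only [Matrix.diag, Matrix.mul_apply, Matrix.transpose_apply]
  rw [Finset.sum_comm]
  exact Finset.sum_congr rfl (fun i _ => Finset.sum_congr rfl (fun j _ => by ring))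

end structural

section frobpart
variable {m : ℕ}

private lemma frob_conj (X : Matrix (Fin (m+3)) (Fin (m+3)) ℝ) :
    frob (Shat (m+3) * X * Shat (m+3)) = frob X := by
  have hS := (shat_mul_self (m := m))
  unfold frob
  congr 1
  rw [sumsq_trace, sumsq_trace]
  have hT : (Shat (m+3) * X * Shat (m+3))ᵀ = Shat (m+3) * Xᵀ * Shat (m+3) := by
    rw [Matrix.transpose_mul, Matrix.transpose_mul, shat_transpose, ← Matrix.mul_assoc]
  rw [hT]
  have h1 : Shat (m+3) * (Shat (m+3) * X * Shat (m+3)) = X * Shat (m+3) := by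
    rw [Matrix.mul_assoc (Shat (m+3)) X (Shat (m+3)), ← Matrix.mul_assoc (Shat (m+3)) (Shat (m+3)),
      hS, Matrix.one_mul]
  have h2 : Shat (m+3) * Xᵀ * Shat (m+3) * (Shat (m+3) * X * Shat (m+3))
      = Shat (m+3) * (Xᵀ * X) * Shat (m+3) := by
    rw [Matrix.mul_assoc (Shat (m+3) * Xᵀ) (Shat (m+3)) (Shat (m+3) * X * Shat (m+3)), h1,
      Matrix.mul_assoc (Shat (m+3)) Xᵀ (X * Shat (m+3)), ← Matrix.mul_assoc Xᵀ X (Shat (m+3)),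
      ← Matrix.mul_assoc (Shat (m+3)) (Xᵀ * X) (Shat (m+3))]
  rw [h2, Matrix.trace_mul_comm (Shat (m+3) * (Xᵀ * X)) (Shat (m+3)),
    ← Matrix.mul_assoc (Shat (m+3)) (Shat (m+3)) (Xᵀ * X), hS, Matrix.one_mul]

private lemma frob_le {N : ℕ} {X Y : Matrix (Fin N) (Fin N) ℝ}
    (h : ∑ i, ∑ j, X i j ^ 2 ≤ ∑ i, ∑ j, Y i j ^ 2) : frob X ≤ frob Y :=
  Real.sqrt_le_sqrt h

end frobpart


/-- for `n ≥ 3` and an `n×n` real matrix `A`, the block-diagonal matrix with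
`(1,1)` entry `A₁₁`, `(n,n)` entry `Aₙₙ`, central block `s(A(2:n-1,2:n-1))` and zeros
elsewhere is the minimizer of `‖B - A‖_F` over `B ∈ τ̂ = {Ŝ_n Λ Ŝ_n : Λ diagonal}`:
it belongs to `τ̂` and its distance to `A` is minimal. -/
theorem shat_opt_is_blockDiag (n : ℕ) (hn : 3 ≤ n) (A : Matrix (Fin n) (Fin n) ℝ) :
    (∃ d : Fin n → ℝ,
        blockDiagExt n (A ⟨0, by omega⟩ ⟨0, by omega⟩) (A ⟨n - 1, by omega⟩ ⟨n - 1, by omega⟩)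
            (sOpt (centerSub hn A))
          = Shat n * Matrix.diagonal d * Shat n) ∧
      ∀ d : Fin n → ℝ,
        frob (blockDiagExt n (A ⟨0, by omega⟩ ⟨0, by omega⟩)
              (A ⟨n - 1, by omega⟩ ⟨n - 1, by omega⟩) (sOpt (centerSub hn A)) - A)
          ≤ frob (Shat n * Matrix.diagonal d * Shat n - A) := by
  obtain ⟨m, rfl⟩ : ∃ m, n = m + 3 := ⟨n - 3, by omega⟩
  set C : Matrix (Fin (m+3)) (Fin (m+3)) ℝ := Shat (m+3) * A * Shat (m+3) with hCdef
  set c : Fin (m+3) → ℝ := fun k => C k k with hcdef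
  have e3 : sOpt (centerSub hn A)
      = sineMat (m+1) * Matrix.diagonal (fun i => c (mide m i)) * sineMat (m+1) := by
    show sineMat (m+1) * Matrix.diagonal
        (Matrix.diag (sineMat (m+1) * recast (centerSub hn A) * sineMat (m+1)))
        * sineMat (m+1) = _
    have hdg : Matrix.diag (sineMat (m+1) * recast (centerSub hn A) * sineMat (m+1))
        = fun i => c (mide m i) := funext fun i => (cmm hn A i i).symm
    rw [hdg]
  have hB : blockDiagExt (m+3) (A ⟨0, by omega⟩ ⟨0, by omega⟩)
        (A ⟨m+3-1, by omega⟩ ⟨m+3-1, by omega⟩) (sOpt (centerSub hn A))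
      = Shat (m+3) * Matrix.diagonal c * Shat (m+3) := by
    rw [e3, L1 c]
    have hl : (⟨m+3-1, by omega⟩ : Fin (m+3)) = ⟨m+2, Nat.lt_succ_self _⟩ := rfl
    rw [hl]
    rw [show c ⟨0, by omega⟩ = A ⟨0, by omega⟩ ⟨0, by omega⟩ from c00 A,
      show c ⟨m+2, by omega⟩ = A ⟨m+2, by omega⟩ ⟨m+2, by omega⟩ from cll A]
  constructor
  · exact ⟨c, hB⟩
  · intro d
    have hfix : Shat (m+3) * C * Shat (m+3) = A := by
      rw [hCdef, Matrix.mul_assoc (Shat (m+3)) A (Shat (m+3)),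
        ← Matrix.mul_assoc (Shat (m+3)) (Shat (m+3)) (A * Shat (m+3)), shat_mul_self,
        Matrix.one_mul, Matrix.mul_assoc A (Shat (m+3)) (Shat (m+3)), shat_mul_self,
        Matrix.mul_one]
    have key1 : ∀ e : Fin (m+3) → ℝ,
        frob (Shat (m+3) * Matrix.diagonal e * Shat (m+3) - A)
          = frob (Matrix.diagonal e - C) := by
      intro e
      have : Shat (m+3) * Matrix.diagonal e * Shat (m+3) - A
          = Shat (m+3) * (Matrix.diagonal e - C) * Shat (m+3) := by
        rw [Matrix.mul_sub, Matrix.sub_mul, hfix]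
      rw [this, frob_conj]
    rw [hB, key1 d, key1 c]
    apply frob_le
    apply Finset.sum_le_sum
    intro i _
    apply Finset.sum_le_sum
    intro j _
    by_cases hij : i = j
    · subst hij
      have h1 : (Matrix.diagonal c - C) i i = 0 := by
        simp [Matrix.sub_apply, Matrix.diagonal_apply_eq, hcdef]
      rw [h1]
      simpa using sq_nonneg ((Matrix.diagonal d - C) i i)
    · have h1 : (Matrix.diagonal c - C) i j = - C i j := by
        simp [Matrix.sub_apply, Matrix.diagonal_apply_ne _ hij]
      have h2 : (Matrix.diagonal d - C) i j = - C i j := by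
        simp [Matrix.sub_apply, Matrix.diagonal_apply_ne _ hij]
      rw [h1, h2]
end

section
/- Let n ≥ 1 and let Λ be an n×n real diagonal matrix. Then there exists z = (z₁,…,zₙ)ᵀ ∈ ℝⁿ such that S_n Λ S_n = 𝒯(z) − ℋ(σ²(z), Jσ²(z)), where 𝒯(z) is the n×n symmetric Toeplitz matrix whose first column is z, ℋ(v,w) is the n×n Hankel matrix whose first column is v and last column is w, σ(z) := (z₂,…,zₙ,0)ᵀ is the upward shift, σ² = σ∘σ, and J is the n×n flip matrix. That is, every matrix in the sine algebra τ = {S_nΛS_n : Λ real diagonal} is a symmetric Toeplitz matrix minus a Hankel correction of this form. -/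
open Matrix

/-- The symmetric Toeplitz matrix generated by `z`: `𝒯(z)_{ij} = z_{|i-j|+1}` (1-based). -/
def toeplitzS (n : ℕ) (z : Fin n → ℝ) : Matrix (Fin n) (Fin n) ℝ :=
  Matrix.of fun i j =>
    z ⟨(i : ℕ) - (j : ℕ) + ((j : ℕ) - (i : ℕ)), by have := i.isLt; have := j.isLt; omega⟩

/-- The Hankel matrix with first column `v` and last column `w`:
`ℋ(v,w)_{ij} = v_{i+j-1}` if `i+j-1 ≤ n`, and `w_{i+j-n}` otherwise (1-based). -/
def hankelM (n : ℕ) (v w : Fin n → ℝ) : Matrix (Fin n) (Fin n) ℝ :=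
  Matrix.of fun i j =>
    if h : (i : ℕ) + (j : ℕ) < n then v ⟨(i : ℕ) + (j : ℕ), h⟩
    else w ⟨(i : ℕ) + (j : ℕ) + 1 - n, by have := i.isLt; have := j.isLt; omega⟩

/-- The upward shift `σ(z) = (z₂,…,zₙ,0)ᵀ`. -/
def shiftVec (n : ℕ) (z : Fin n → ℝ) : Fin n → ℝ := fun i =>
  if h : (i : ℕ) + 1 < n then z ⟨(i : ℕ) + 1, h⟩ else 0

/-- The flip `(Jz)_i = z_{n+1-i}` (1-based). -/
def flipVec (n : ℕ) (z : Fin n → ℝ) : Fin n → ℝ := fun i =>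
  z ⟨n - 1 - (i : ℕ), by have := i.isLt; omega⟩

/-- The auxiliary "cosine profile" `c(x) = Σ_k d_k/(n+1) · cos(x(k+1)π/(n+1))`. -/
noncomputable def ccv (n : ℕ) (d : Fin n → ℝ) (x : ℝ) : ℝ :=
  ∑ k : Fin n, d k / (n + 1) * Real.cos (x * (((k : ℕ) : ℝ) + 1) * Real.pi / (n + 1))

lemma ccv_neg (n : ℕ) (d : Fin n → ℝ) (x : ℝ) : ccv n d (-x) = ccv n d x := by
  unfold ccv
  refine Finset.sum_congr rfl fun k _ => ?_
  rw [show -x * (((k : ℕ) : ℝ) + 1) * Real.pi / (n + 1)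
      = -(x * (((k : ℕ) : ℝ) + 1) * Real.pi / (n + 1)) by ring, Real.cos_neg]

lemma ccv_refl (n : ℕ) (d : Fin n → ℝ) (x : ℝ) :
    ccv n d (2 * (n + 1) - x) = ccv n d x := by
  unfold ccv
  refine Finset.sum_congr rfl fun k _ => ?_
  rw [show (2 * ((n : ℝ) + 1) - x) * (((k : ℕ) : ℝ) + 1) * Real.pi / (n + 1)
      = (((k : ℕ) + 1 : ℕ) : ℝ) * (2 * Real.pi)
        - x * (((k : ℕ) : ℝ) + 1) * Real.pi / (n + 1) by push_cast; field_simp,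
    Real.cos_nat_mul_two_pi_sub]

lemma ccv_nat_eq (n : ℕ) (d : Fin n → ℝ) {a b : ℕ} (h : a + b = 2 * (n + 1)) :
    ccv n d (a : ℝ) = ccv n d (b : ℝ) := by
  have hc : ((a : ℕ) : ℝ) = 2 * ((n : ℝ) + 1) - (b : ℝ) := by
    have := congrArg (Nat.cast : ℕ → ℝ) h
    push_cast at this
    linarith
  rw [hc, ccv_refl]

lemma lhs_entry (n : ℕ) (d : Fin n → ℝ) (i j : Fin n) :
    (sineMat n * Matrix.diagonal d * sineMat n) i j
      = ccv n d (((i : ℕ) : ℝ) - ((j : ℕ) : ℝ))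
        - ccv n d (((i : ℕ) : ℝ) + ((j : ℕ) : ℝ) + 2) := by
  rw [Matrix.mul_apply]
  unfold ccv
  rw [← Finset.sum_sub_distrib]
  refine Finset.sum_congr rfl fun k _ => ?_
  rw [Matrix.mul_diagonal]
  simp only [sineMat, Matrix.of_apply]
  set a := (((i : ℕ) : ℝ) + 1) * (((k : ℕ) : ℝ) + 1) * Real.pi / (n + 1) with ha
  set b := (((k : ℕ) : ℝ) + 1) * (((j : ℕ) : ℝ) + 1) * Real.pi / (n + 1) with hb
  have h2 : Real.sqrt (2 / ((n : ℝ) + 1)) * Real.sqrt (2 / ((n : ℝ) + 1)) = 2 / ((n : ℝ) + 1) :=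
    Real.mul_self_sqrt (by positivity)
  have key : Real.cos ((((i : ℕ) : ℝ) - ((j : ℕ) : ℝ)) * (((k : ℕ) : ℝ) + 1) * Real.pi / (n + 1))
      - Real.cos ((((i : ℕ) : ℝ) + ((j : ℕ) : ℝ) + 2) * (((k : ℕ) : ℝ) + 1) * Real.pi / (n + 1))
      = 2 * (Real.sin a * Real.sin b) := by
    rw [show (((i : ℕ) : ℝ) - ((j : ℕ) : ℝ)) * (((k : ℕ) : ℝ) + 1) * Real.pi / (n + 1) = a - b by
          rw [ha, hb]; ring,
        show (((i : ℕ) : ℝ) + ((j : ℕ) : ℝ) + 2) * (((k : ℕ) : ℝ) + 1) * Real.pi / (n + 1)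
          = a + b by rw [ha, hb]; ring,
        Real.cos_sub, Real.cos_add]
    ring
  linear_combination (-(d k / ((n : ℝ) + 1))) * key + (d k * Real.sin a * Real.sin b) * h2

/-- every matrix `S_n Λ S_n` of the sine algebra `τ` can be written as
`𝒯(z) - ℋ(σ²(z), Jσ²(z))` for some vector `z ∈ ℝⁿ`. -/
theorem tau_toeplitz_hankel (n : ℕ) (hn : 1 ≤ n) (d : Fin n → ℝ) :
    ∃ z : Fin n → ℝ,
      sineMat n * Matrix.diagonal d * sineMat n
        = toeplitzS n z
            - hankelM n (shiftVec n (shiftVec n z)) (flipVec n (shiftVec n (shiftVec n z))) := by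
  refine ⟨fun t => ccv n d ((t : ℕ) : ℝ) - ccv n d (((n + (n + (t : ℕ)) % 2 : ℕ)) : ℝ), ?_⟩
  ext i j
  rw [Matrix.sub_apply, lhs_entry]
  have hs := i.isLt
  have ht := j.isLt
  simp only [toeplitzS, hankelM, shiftVec, flipVec, Matrix.of_apply]
  -- Toeplitz part
  have e1 : ccv n d (((i : ℕ) : ℝ) - ((j : ℕ) : ℝ))
      = ccv n d ((((i : ℕ) - (j : ℕ) + ((j : ℕ) - (i : ℕ)) : ℕ)) : ℝ) := by
    rcases le_total (j : ℕ) (i : ℕ) with h | h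
    · rw [show ((i : ℕ) - (j : ℕ) + ((j : ℕ) - (i : ℕ))) = (i : ℕ) - (j : ℕ) by omega,
        Nat.cast_sub h]
    · rw [show ((i : ℕ) - (j : ℕ) + ((j : ℕ) - (i : ℕ))) = (j : ℕ) - (i : ℕ) by omega,
        Nat.cast_sub h,
        show ((i : ℕ) : ℝ) - ((j : ℕ) : ℝ) = -(((j : ℕ) : ℝ) - ((i : ℕ) : ℝ)) by ring, ccv_neg]
  have e2 : (n + (n + ((i : ℕ) - (j : ℕ) + ((j : ℕ) - (i : ℕ)))) % 2)
      = n + (n + (i : ℕ) + (j : ℕ)) % 2 := by omega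
  rw [e1, e2]
  -- now handle the Hankel part by cases on s + t versus n
  rcases Nat.lt_or_ge ((i : ℕ) + (j : ℕ) + 2) n with hA | hA
  · -- s + t + 2 < n
    rw [dif_pos (by omega : (i : ℕ) + (j : ℕ) < n), dif_pos (by omega : (i : ℕ) + (j : ℕ) + 1 < n),
      dif_pos (by omega : (i : ℕ) + (j : ℕ) + 1 + 1 < n)]
    have : ccv n d ((((i : ℕ) + (j : ℕ) + 1 + 1 : ℕ)) : ℝ)
        = ccv n d (((i : ℕ) : ℝ) + ((j : ℕ) : ℝ) + 2) := by push_cast; ring_nf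
    rw [this, show (n + (n + ((i : ℕ) + (j : ℕ) + 1 + 1)) % 2)
        = n + (n + (i : ℕ) + (j : ℕ)) % 2 by omega]
    ring
  · rcases Nat.lt_or_ge ((i : ℕ) + (j : ℕ)) n with hB | hB
    · -- s + t ∈ {n-2, n-1} (or n = 1 with s = t = 0) : the shifted entry vanishes
      rw [dif_pos hB]
      rcases Nat.lt_or_ge ((i : ℕ) + (j : ℕ) + 1) n with hC | hC
      · -- s + t + 2 = n
        rw [dif_pos hC, dif_neg (by omega : ¬ (i : ℕ) + (j : ℕ) + 1 + 1 < n)]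
        have hn2 : (i : ℕ) + (j : ℕ) + 2 = n := by omega
        have : ccv n d (((i : ℕ) : ℝ) + ((j : ℕ) : ℝ) + 2)
            = ccv n d (((n + (n + (i : ℕ) + (j : ℕ)) % 2 : ℕ)) : ℝ) := by
          rw [show (n + (n + (i : ℕ) + (j : ℕ)) % 2) = n by omega]
          push_cast [← hn2]; ring_nf
        rw [← this]; ring
      · -- s + t + 2 = n + 1
        rw [dif_neg (by omega : ¬ (i : ℕ) + (j : ℕ) + 1 < n)]
        have hn1 : (i : ℕ) + (j : ℕ) + 2 = n + 1 := by omega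
        have : ccv n d (((i : ℕ) : ℝ) + ((j : ℕ) : ℝ) + 2)
            = ccv n d (((n + (n + (i : ℕ) + (j : ℕ)) % 2 : ℕ)) : ℝ) := by
          rw [show (n + (n + (i : ℕ) + (j : ℕ)) % 2) = n + 1 by omega]
          push_cast [← hn1]; ring_nf
        rw [← this]; ring
    · -- s + t ≥ n : the flipped branch
      rw [dif_neg (by omega : ¬ (i : ℕ) + (j : ℕ) < n)]
      rcases Nat.lt_or_ge n ((i : ℕ) + (j : ℕ)) with hD | hD
      · -- s + t > n : entry is z (2n - s - t)
        rw [dif_pos (by omega : n - 1 - ((i : ℕ) + (j : ℕ) + 1 - n) + 1 < n),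
          dif_pos (by omega : n - 1 - ((i : ℕ) + (j : ℕ) + 1 - n) + 1 + 1 < n)]
        have hidx : n - 1 - ((i : ℕ) + (j : ℕ) + 1 - n) + 1 + 1 = 2 * n - ((i : ℕ) + (j : ℕ)) := by
          omega
        rw [hidx]
        have hsum : (2 * n - ((i : ℕ) + (j : ℕ))) + ((i : ℕ) + (j : ℕ) + 2) = 2 * (n + 1) := by
          omega
        have e3 : ccv n d (((2 * n - ((i : ℕ) + (j : ℕ)) : ℕ)) : ℝ)
            = ccv n d (((i : ℕ) : ℝ) + ((j : ℕ) : ℝ) + 2) := by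
          rw [ccv_nat_eq n d hsum]; push_cast; ring_nf
        rw [e3, show (n + (n + (2 * n - ((i : ℕ) + (j : ℕ)))) % 2)
            = n + (n + (i : ℕ) + (j : ℕ)) % 2 by omega]
        ring
      · -- s + t = n : entry vanishes, and ccv(n+2) = ccv(n)
        have hst : (i : ℕ) + (j : ℕ) = n := by omega
        rw [dif_pos (by omega : n - 1 - ((i : ℕ) + (j : ℕ) + 1 - n) + 1 < n),
          dif_neg (by omega : ¬ n - 1 - ((i : ℕ) + (j : ℕ) + 1 - n) + 1 + 1 < n)]
        have hsum : (n + 2) + n = 2 * (n + 1) := by ring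
        have e3 : ccv n d (((i : ℕ) : ℝ) + ((j : ℕ) : ℝ) + 2)
            = ccv n d (((n + (n + (i : ℕ) + (j : ℕ)) % 2 : ℕ)) : ℝ) := by
          rw [show (n + (n + (i : ℕ) + (j : ℕ)) % 2) = n by omega,
            show ((i : ℕ) : ℝ) + ((j : ℕ) : ℝ) + 2 = (((n + 2 : ℕ)) : ℝ) by push_cast [← hst]; ring,
            ccv_nat_eq n d hsum]
        rw [e3]; ring
end
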